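/- Let r ≥ 2 and let k_1, …, k_r be variables. Then the sum over all unordered increasing trees T on the label set {1,…,r} of wt(T) equals the sum, over all set partitions {X_1, …, X_j} of {2,…,r} into j ≥ 1 nonempty blocks, of k_1^j · ∏_{i=1}^{j} (K_{X_i} − |X_i| + 1) · (Σ_{T_i} wt(T_i)), where K_{X_i} = Σ_{u ∈ X_i} k_u and the inner sum Σ_{T_i} runs over all unordered increasing trees with label set X_i. -/

import Mathlib

open scoped Classical

/-- The root label of a tree with label set `V`, namely `min V` (junk value `0` if `V = ∅`). -/
def rootOf (V : Finset ℕ) : ℕ := V.min.untopD 0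

/-- An unordered increasing tree with label set `V`, encoded by a (total) parent function
`f : ℕ → ℕ`: every non-root vertex `v ∈ V` has a father `f v ∈ V` with `f v < v`;
as a normalization, `f` is the identity on the root and outside `V`. -/
def IsIncTree (V : Finset ℕ) (f : ℕ → ℕ) : Prop :=
  (∀ v ∈ V, if v = rootOf V then f v = v else f v ∈ V ∧ f v < v) ∧ ∀ v, v ∉ V → f v = v

/-- The hook of a vertex `v` in the tree with label set `V` and parent function `f`:
the set of `u ∈ V` consisting of `v` and its descendants (`u` is a descendant of `v` if
iterating `f` starting from `u` reaches `v`). -/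
noncomputable def hookN (V : Finset ℕ) (f : ℕ → ℕ) (v : ℕ) : Finset ℕ :=
  V.filter fun u => ∃ n, f^[n] u = v

/-- The weight of an unordered increasing tree with label set `V` and parent function `f`:
`wt(T) = ∏_{v ∈ V, v ≠ min V} k_{f(v)} · ((Σ_{u ∈ 𝔥_T(v)} k_u) − h_T(v) + 1)`,
in the polynomial ring `ℚ[(k_v)]` (the variable `v : ℕ` is `k_v`). -/
noncomputable def wtN (V : Finset ℕ) (f : ℕ → ℕ) : MvPolynomial ℕ ℚ :=
  ∏ v ∈ V.erase (rootOf V),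
    MvPolynomial.X (f v) *
      ((∑ u ∈ hookN V f v, MvPolynomial.X u) - ((hookN V f v).card : MvPolynomial ℕ ℚ) + 1)

/-!
Removing the root `ρ = min V` of an increasing tree on `V` leaves the subtrees hanging from the
children of `ρ`. Their vertex sets, the hooks of these children, form a set partition of
`V ∖ {ρ}`, and each of them is an increasing tree in its own right; conversely, a partition of
`V ∖ {ρ}` with an increasing tree on every block is grafted back into a tree on `V` by attaching
each block root to `ρ`. Under this bijection the weight factorises: a child `c` of the root with
hook `B` contributes `k_ρ (K_B - |B| + 1)`, and every other vertex has the same father and the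
same hook in its subtree as in the whole tree, hence the same factor.
-/

open Finset MvPolynomial

section Partition

variable {α : Type*} [DecidableEq α]

def IsPartition (s : Finset α) (P : Finset (Finset α)) : Prop :=
  (∀ B ∈ P, B.Nonempty) ∧ (P : Set (Finset α)).PairwiseDisjoint id ∧ P.biUnion id = s

variable {s B B' : Finset α} {P : Finset (Finset α)} {v : α}

lemma IsPartition.subset (hP : IsPartition s P) (hB : B ∈ P) : B ⊆ s :=
  hP.2.2 ▸ subset_biUnion_of_mem id hB

lemma IsPartition.exists_mem (hP : IsPartition s P) (hv : v ∈ s) : ∃ B ∈ P, v ∈ B := by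
  rw [← hP.2.2] at hv
  simpa using hv

lemma IsPartition.eq_of_mem (hP : IsPartition s P) (hB : B ∈ P) (hB' : B' ∈ P) (hv : v ∈ B)
    (hv' : v ∈ B') : B = B' := by
  by_contra hne
  exact disjoint_left.1 (hP.2.1 hB hB' hne) hv hv'

lemma finite_setOf_isPartition (s : Finset α) : {P | IsPartition s P}.Finite :=
  s.powerset.powerset.finite_toSet.subset fun _ hP =>
    mem_powerset.2 fun _ hB => mem_powerset.2 (hP.subset hB)

end Partition

lemma iterate_eq_iterate_of_eqOn {α : Type*} {f g : α → α} {S : Set α} (hfg : Set.EqOn f g S)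
    {x : α} {n : ℕ} (hpath : ∀ k < n, f^[k] x ∈ S) : g^[n] x = f^[n] x := by
  induction n with
  | zero => rfl
  | succ n ih =>
    rw [Function.iterate_succ_apply', Function.iterate_succ_apply',
      ih fun k hk => hpath k (by omega), hfg (hpath n n.lt_succ_self)]

section Root

variable {V : Finset ℕ} {v : ℕ}

lemma rootOf_eq_min' (h : V.Nonempty) : rootOf V = V.min' h := by
  rw [rootOf, ← coe_min' h]
  rfl

lemma rootOf_mem (h : V.Nonempty) : rootOf V ∈ V :=
  rootOf_eq_min' h ▸ min'_mem V h

lemma rootOf_le (hv : v ∈ V) : rootOf V ≤ v :=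
  rootOf_eq_min' ⟨v, hv⟩ ▸ min'_le V v hv

lemma rootOf_lt (hv : v ∈ V.erase (rootOf V)) : rootOf V < v :=
  (rootOf_le (mem_of_mem_erase hv)).lt_of_ne (ne_of_mem_erase hv).symm

lemma rootOf_eq (hv : v ∈ V) (hle : ∀ u ∈ V, v ≤ u) : rootOf V = v :=
  (rootOf_le hv).antisymm (hle _ (rootOf_mem ⟨v, hv⟩))

end Root

section Hook

variable {V : Finset ℕ} {f : ℕ → ℕ} {u v : ℕ}

lemma mem_hookN_self (hv : v ∈ V) : v ∈ hookN V f v :=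
  mem_filter.2 ⟨hv, 0, rfl⟩

lemma hookN_subset : hookN V f v ⊆ V :=
  filter_subset _ _

lemma hookN_subset_hookN (hu : u ∈ hookN V f v) : hookN V f u ⊆ hookN V f v := by
  obtain ⟨-, n, hn⟩ := mem_filter.1 hu
  intro w hw
  obtain ⟨hwV, m, hm⟩ := mem_filter.1 hw
  exact mem_filter.2 ⟨hwV, n + m, by rw [Function.iterate_add_apply, hm, hn]⟩

end Hook

namespace IsIncTree

variable {V W : Finset ℕ} {f g : ℕ → ℕ} {u v w : ℕ}

lemma apply_eq_self (hf : IsIncTree V f) (hv : v ∉ V.erase (rootOf V)) : f v = v := by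
  by_cases hvV : v ∈ V
  · have hroot : v = rootOf V := by_contra fun h => hv (mem_erase.2 ⟨h, hvV⟩)
    simpa [hroot] using hf.1 v hvV
  · exact hf.2 v hvV

lemma apply_rootOf (hf : IsIncTree V f) : f (rootOf V) = rootOf V :=
  hf.apply_eq_self (notMem_erase _ _)

lemma apply_mem_and_lt (hf : IsIncTree V f) (hv : v ∈ V.erase (rootOf V)) :
    f v ∈ V ∧ f v < v := by
  simpa [if_neg (ne_of_mem_erase hv)] using hf.1 v (mem_of_mem_erase hv)

lemma apply_mem (hf : IsIncTree V f) (hv : v ∈ V) : f v ∈ V := by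
  by_cases hv' : v ∈ V.erase (rootOf V)
  · exact (hf.apply_mem_and_lt hv').1
  · rwa [hf.apply_eq_self hv']

lemma iterate_mem (hf : IsIncTree V f) (hv : v ∈ V) (n : ℕ) : f^[n] v ∈ V := by
  induction n with
  | zero => exact hv
  | succ n ih => rw [Function.iterate_succ_apply']; exact hf.apply_mem ih

lemma iterate_le (hf : IsIncTree V f) (n v : ℕ) : f^[n] v ≤ v := by
  induction n generalizing v with
  | zero => rfl
  | succ n ih =>
    rw [Function.iterate_succ_apply]
    refine (ih _).trans ?_
    by_cases hv : v ∈ V.erase (rootOf V)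
    · exact (hf.apply_mem_and_lt hv).2.le
    · exact (hf.apply_eq_self hv).le

lemma exists_iterate_eq_rootOf (hf : IsIncTree V f) (hv : v ∈ V) : ∃ n, f^[n] v = rootOf V := by
  induction v using Nat.strong_induction_on with
  | _ v ih =>
    by_cases hvr : v = rootOf V
    · exact ⟨0, hvr⟩
    · have hv' : v ∈ V.erase (rootOf V) := mem_erase.2 ⟨hvr, hv⟩
      obtain ⟨hfv, hlt⟩ := hf.apply_mem_and_lt hv'
      obtain ⟨n, hn⟩ := ih (f v) hlt hfv
      exact ⟨n + 1, by rwa [Function.iterate_succ_apply]⟩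

lemma le_of_mem_hookN (hf : IsIncTree V f) (hu : u ∈ hookN V f v) : v ≤ u := by
  obtain ⟨-, n, hn⟩ := mem_filter.1 hu
  exact hn ▸ hf.iterate_le n u

lemma rootOf_hookN (hf : IsIncTree V f) (hv : v ∈ V) : rootOf (hookN V f v) = v :=
  rootOf_eq (mem_hookN_self hv) fun _ hu => hf.le_of_mem_hookN hu

lemma hookN_rootOf (hf : IsIncTree V f) : hookN V f (rootOf V) = V :=
  filter_true_of_mem fun _ hv => hf.exists_iterate_eq_rootOf hv

lemma apply_mem_hookN (hf : IsIncTree V f) (hw : w ∈ hookN V f v) (hwv : w ≠ v) :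
    f w ∈ hookN V f v := by
  obtain ⟨hwV, n, hn⟩ := mem_filter.1 hw
  cases n with
  | zero => exact absurd hn hwv
  | succ n =>
    exact mem_filter.2 ⟨hf.apply_mem hwV, n, by rwa [Function.iterate_succ_apply] at hn⟩

/-- Hooks can be computed in a second parent function `g` as long as `g` agrees with `f` along
the paths from the hook to its top vertex. -/
lemma hookN_subset_hookN_of_eqOn {S : Set ℕ} (hf : IsIncTree V f) (hfg : Set.EqOn f g S)
    (hS : ↑((hookN V f u).erase u) ⊆ S) (hW : hookN V f u ⊆ W) :
    hookN V f u ⊆ hookN W g u := by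
  intro w hw
  obtain ⟨hwV, hex⟩ := mem_filter.1 hw
  refine mem_filter.2 ⟨hW hw, Nat.find hex, ?_⟩
  rw [iterate_eq_iterate_of_eqOn hfg, Nat.find_spec hex]
  intro k hk
  refine hS (mem_coe.2 (mem_erase.2 ⟨Nat.find_min hex hk,
    mem_filter.2 ⟨hf.iterate_mem hwV k, Nat.find hex - k, ?_⟩⟩))
  rw [← Function.iterate_add_apply, Nat.sub_add_cancel hk.le, Nat.find_spec hex]

end IsIncTree

noncomputable def restrictTree (f : ℕ → ℕ) (B : Finset ℕ) : ℕ → ℕ :=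
  (B.erase (rootOf B)).piecewise f id

lemma eqOn_restrictTree (f : ℕ → ℕ) (B : Finset ℕ) :
    Set.EqOn f (restrictTree f B) ↑(B.erase (rootOf B)) :=
  fun _ hv => (piecewise_eq_of_mem _ _ _ (mem_coe.1 hv)).symm

lemma restrictTree_of_notMem {f : ℕ → ℕ} {B : Finset ℕ} {v : ℕ} (hv : v ∉ B.erase (rootOf B)) :
    restrictTree f B v = v :=
  piecewise_eq_of_notMem _ _ _ hv

namespace IsIncTree

variable {V : Finset ℕ} {f : ℕ → ℕ} {u v : ℕ}

lemma isIncTree_restrictTree (hf : IsIncTree V f) (hv : v ∈ V) :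
    IsIncTree (hookN V f v) (restrictTree f (hookN V f v)) := by
  refine ⟨fun u hu => ?_, fun u hu => restrictTree_of_notMem fun h => hu (mem_of_mem_erase h)⟩
  split_ifs with hroot
  · exact restrictTree_of_notMem fun h => ne_of_mem_erase h hroot
  · rw [← eqOn_restrictTree f _ (mem_coe.2 (mem_erase.2 ⟨hroot, hu⟩))]
    rw [hf.rootOf_hookN hv] at hroot
    have hvu : rootOf V < u :=
      (rootOf_le hv).trans_lt ((hf.le_of_mem_hookN hu).lt_of_ne (Ne.symm hroot))
    exact ⟨hf.apply_mem_hookN hu hroot,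
      (hf.apply_mem_and_lt (mem_erase.2 ⟨hvu.ne', hookN_subset hu⟩)).2⟩

lemma hookN_restrictTree (hf : IsIncTree V f) (hv : v ∈ V) (hu : u ∈ hookN V f v) :
    hookN (hookN V f v) (restrictTree f (hookN V f v)) u = hookN V f u := by
  set H := hookN V f v
  have hg := hf.isIncTree_restrictTree hv
  have hvu : v ≤ u := hf.le_of_mem_hookN hu
  have avoid : ∀ w ∈ H, u ≤ w → w ≠ u → w ∈ H.erase (rootOf H) := fun w hw huw hwu =>
    mem_erase.2 ⟨by rw [hf.rootOf_hookN hv]; omega, hw⟩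
  refine subset_antisymm
    (hg.hookN_subset_hookN_of_eqOn (eqOn_restrictTree f H).symm ?_
      (hookN_subset.trans hookN_subset))
    (hf.hookN_subset_hookN_of_eqOn (eqOn_restrictTree f H) ?_ (hookN_subset_hookN hu))
  · intro w hw
    obtain ⟨hwu, hw⟩ := mem_erase.1 (mem_coe.1 hw)
    exact avoid w (hookN_subset hw) (hg.le_of_mem_hookN hw) hwu
  · intro w hw
    obtain ⟨hwu, hw⟩ := mem_erase.1 (mem_coe.1 hw)
    exact avoid w (hookN_subset_hookN hu hw) (hf.le_of_mem_hookN hw) hwu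

end IsIncTree

noncomputable def rootChildren (V : Finset ℕ) (f : ℕ → ℕ) : Finset ℕ :=
  (V.erase (rootOf V)).filter fun c => f c = rootOf V

noncomputable def rootBlocks (V : Finset ℕ) (f : ℕ → ℕ) : Finset (Finset ℕ) :=
  (rootChildren V f).image (hookN V f)

lemma mem_rootChildren {V : Finset ℕ} {f : ℕ → ℕ} {c : ℕ} :
    c ∈ rootChildren V f ↔ c ∈ V.erase (rootOf V) ∧ f c = rootOf V :=
  mem_filter

namespace IsIncTree

variable {V : Finset ℕ} {f : ℕ → ℕ} {c c' u : ℕ}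

lemma hookN_subset_erase_rootOf (hf : IsIncTree V f) (hc : c ∈ rootChildren V f) :
    hookN V f c ⊆ V.erase (rootOf V) := fun _ hu =>
  mem_erase.2 ⟨((rootOf_lt (mem_rootChildren.1 hc).1).trans_le (hf.le_of_mem_hookN hu)).ne',
    hookN_subset hu⟩

lemma exists_mem_rootChildren (hf : IsIncTree V f) (hu : u ∈ V.erase (rootOf V)) :
    ∃ c ∈ rootChildren V f, u ∈ hookN V f c := by
  obtain ⟨huρ, huV⟩ := mem_erase.1 hu
  have hex := hf.exists_iterate_eq_rootOf huV
  obtain ⟨n, hn⟩ : ∃ n, Nat.find hex = n + 1 :=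
    Nat.exists_eq_add_one_of_ne_zero fun h0 => huρ (by simpa [h0] using Nat.find_spec hex)
  have hlast : f (f^[n] u) = rootOf V := by
    rw [← Function.iterate_succ_apply' f n u, Nat.succ_eq_add_one, ← hn, Nat.find_spec hex]
  refine ⟨f^[n] u, mem_rootChildren.2 ⟨mem_erase.2 ⟨Nat.find_min hex (by omega),
    hf.iterate_mem huV n⟩, hlast⟩, mem_filter.2 ⟨huV, n, rfl⟩⟩

lemma eq_of_iterate_eq (hf : IsIncTree V f) (hc : c ∈ rootChildren V f)
    (hc' : c' ∈ rootChildren V f) {k : ℕ} (hk : f^[k] c = c') : c = c' := by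
  cases k with
  | zero => exact hk
  | succ k =>
    rw [Function.iterate_succ_apply, (mem_rootChildren.1 hc).2,
      Function.iterate_fixed hf.apply_rootOf] at hk
    exact absurd hk.symm (ne_of_mem_erase (mem_rootChildren.1 hc').1)

lemma disjoint_hookN (hf : IsIncTree V f) (hc : c ∈ rootChildren V f)
    (hc' : c' ∈ rootChildren V f) (hne : c ≠ c') : Disjoint (hookN V f c) (hookN V f c') := by
  refine disjoint_left.2 fun u hu hu' => ?_
  obtain ⟨-, n, hn⟩ := mem_filter.1 hu
  obtain ⟨-, m, hm⟩ := mem_filter.1 hu'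
  rcases le_total n m with hle | hle
  · refine hne (hf.eq_of_iterate_eq hc hc' (k := m - n) ?_)
    rw [← hn, ← Function.iterate_add_apply, Nat.sub_add_cancel hle, hm]
  · refine hne (hf.eq_of_iterate_eq hc' hc (k := n - m) ?_).symm
    rw [← hm, ← Function.iterate_add_apply, Nat.sub_add_cancel hle, hn]

lemma isPartition_rootBlocks (hf : IsIncTree V f) :
    IsPartition (V.erase (rootOf V)) (rootBlocks V f) := by
  refine ⟨?_, ?_, ?_⟩
  · simp only [rootBlocks, forall_mem_image]
    exact fun c hc => ⟨c, mem_hookN_self (mem_of_mem_erase (mem_rootChildren.1 hc).1)⟩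
  · intro B hB B' hB' hne
    obtain ⟨c, hc, rfl⟩ := mem_image.1 (mem_coe.1 hB)
    obtain ⟨c', hc', rfl⟩ := mem_image.1 (mem_coe.1 hB')
    exact hf.disjoint_hookN hc hc' fun h => hne (h ▸ rfl)
  · ext u
    simp only [rootBlocks, mem_biUnion, mem_image, id, exists_exists_and_eq_and]
    exact ⟨fun ⟨c, hc, hu⟩ => hf.hookN_subset_erase_rootOf hc hu, hf.exists_mem_rootChildren⟩

end IsIncTree

noncomputable def hookFactor (B : Finset ℕ) : MvPolynomial ℕ ℚ :=
  ∑ u ∈ B, X u - (B.card : MvPolynomial ℕ ℚ) + 1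

lemma wtN_eq_prod (V : Finset ℕ) (f : ℕ → ℕ) :
    wtN V f = ∏ v ∈ V.erase (rootOf V), X (f v) * hookFactor (hookN V f v) :=
  rfl

namespace IsIncTree

variable {V : Finset ℕ} {f : ℕ → ℕ} {v : ℕ}

lemma prod_hookN (hf : IsIncTree V f) (hv : v ∈ V) :
    ∏ w ∈ hookN V f v, X (f w) * hookFactor (hookN V f w)
      = X (f v) * hookFactor (hookN V f v) *
          wtN (hookN V f v) (restrictTree f (hookN V f v)) := by
  rw [← mul_prod_erase _ _ (mem_hookN_self hv), wtN_eq_prod, hf.rootOf_hookN hv]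
  congr 1
  refine prod_congr rfl fun w hw => ?_
  have hw' : w ∈ (hookN V f v).erase (rootOf (hookN V f v)) := by rwa [hf.rootOf_hookN hv]
  rw [← eqOn_restrictTree f _ (mem_coe.2 hw'),
    hf.hookN_restrictTree hv (mem_of_mem_erase hw)]

lemma wtN_eq_prod_rootBlocks (hf : IsIncTree V f) :
    wtN V f = X (rootOf V) ^ (rootBlocks V f).card *
      ∏ B ∈ rootBlocks V f, hookFactor B * wtN B (restrictTree f B) := by
  have hP := hf.isPartition_rootBlocks
  calc wtN V f = ∏ B ∈ rootBlocks V f, ∏ v ∈ B, X (f v) * hookFactor (hookN V f v) := by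
        rw [wtN_eq_prod, ← hP.2.2, prod_biUnion hP.2.1]
        rfl
    _ = ∏ B ∈ rootBlocks V f, X (rootOf V) * (hookFactor B * wtN B (restrictTree f B)) := by
        refine prod_congr rfl fun B hB => ?_
        obtain ⟨c, hc, rfl⟩ := mem_image.1 hB
        obtain ⟨hcV, hfc⟩ := mem_rootChildren.1 hc
        rw [hf.prod_hookN (mem_of_mem_erase hcV), hfc, mul_assoc]
    _ = _ := by rw [prod_mul_distrib, prod_const]

end IsIncTree

noncomputable def graft (ρ : ℕ) (P : Finset (Finset ℕ)) (γ : ∀ B ∈ P, ℕ → ℕ) (v : ℕ) : ℕ :=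
  if h : ∃ B ∈ P, v ∈ B then
    if v = rootOf h.choose then ρ else γ h.choose h.choose_spec.1 v
  else v

section Graft

variable {s V B : Finset ℕ} {P : Finset (Finset ℕ)} {γ : ∀ B ∈ P, ℕ → ℕ} {ρ v : ℕ}

lemma graft_of_mem (hP : IsPartition s P) (hB : B ∈ P) (hv : v ∈ B) :
    graft ρ P γ v = if v = rootOf B then ρ else γ B hB v := by
  have h : ∃ B ∈ P, v ∈ B := ⟨B, hB, hv⟩
  have hcongr : ∀ B' (hB' : B' ∈ P), B' = B →
      (if v = rootOf B' then ρ else γ B' hB' v) = if v = rootOf B then ρ else γ B hB v := by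
    rintro _ _ rfl
    rfl
  rw [graft, dif_pos h]
  exact hcongr _ _ (hP.eq_of_mem h.choose_spec.1 hB h.choose_spec.2 hv)

lemma graft_of_notMem (hP : IsPartition s P) (hv : v ∉ s) : graft ρ P γ v = v :=
  dif_neg fun ⟨_, hB, hvB⟩ => hv (hP.subset hB hvB)

lemma graft_rootOf (hP : IsPartition s P) (hB : B ∈ P) : graft ρ P γ (rootOf B) = ρ := by
  rw [graft_of_mem hP hB (rootOf_mem (hP.1 B hB)), if_pos rfl]

lemma eqOn_graft (hP : IsPartition s P) (hB : B ∈ P) :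
    Set.EqOn (γ B hB) (graft ρ P γ) ↑(B.erase (rootOf B)) := fun v hv => by
  obtain ⟨hvr, hvB⟩ := mem_erase.1 (mem_coe.1 hv)
  rw [graft_of_mem hP hB hvB, if_neg hvr]

lemma isIncTree_graft (hP : IsPartition (V.erase (rootOf V)) P)
    (hγ : ∀ B (hB : B ∈ P), IsIncTree B (γ B hB)) : IsIncTree V (graft (rootOf V) P γ) := by
  refine ⟨fun v hv => ?_, fun v hv => graft_of_notMem hP fun h => hv (mem_of_mem_erase h)⟩
  split_ifs with hvρ
  · exact graft_of_notMem hP fun h => ne_of_mem_erase h hvρ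
  · have hv' : v ∈ V.erase (rootOf V) := mem_erase.2 ⟨hvρ, hv⟩
    obtain ⟨B, hB, hvB⟩ := hP.exists_mem hv'
    rw [graft_of_mem hP hB hvB]
    split_ifs with hvB'
    · exact ⟨rootOf_mem ⟨v, hv⟩, rootOf_lt hv'⟩
    · obtain ⟨hγB, hlt⟩ := (hγ B hB).apply_mem_and_lt (mem_erase.2 ⟨hvB', hvB⟩)
      exact ⟨mem_of_mem_erase (hP.subset hB hγB), hlt⟩

lemma iterate_graft_mem_or_eq_rootOf (hP : IsPartition (V.erase (rootOf V)) P)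
    (hγ : ∀ B (hB : B ∈ P), IsIncTree B (γ B hB)) (hB : B ∈ P) (hv : v ∈ B) (k : ℕ) :
    (graft (rootOf V) P γ)^[k] v ∈ B ∨ (graft (rootOf V) P γ)^[k] v = rootOf V := by
  induction k with
  | zero => exact Or.inl hv
  | succ k ih =>
    rw [Function.iterate_succ_apply']
    rcases ih with hk | hk
    · rw [graft_of_mem hP hB hk]
      split_ifs
      · exact Or.inr rfl
      · exact Or.inl ((hγ B hB).apply_mem hk)
    · exact Or.inr (by rw [hk, (isIncTree_graft hP hγ).apply_rootOf])

lemma hookN_graft_rootOf (hP : IsPartition (V.erase (rootOf V)) P)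
    (hγ : ∀ B (hB : B ∈ P), IsIncTree B (γ B hB)) (hB : B ∈ P) :
    hookN V (graft (rootOf V) P γ) (rootOf B) = B := by
  have hBroot : rootOf B ∈ V.erase (rootOf V) := hP.subset hB (rootOf_mem (hP.1 B hB))
  refine subset_antisymm (fun w hw => ?_) ?_
  · obtain ⟨hwV, n, hn⟩ := mem_filter.1 hw
    have hw' : w ∈ V.erase (rootOf V) := by
      refine mem_erase.2 ⟨fun hwρ => ne_of_mem_erase hBroot ?_, hwV⟩
      rw [← hn, hwρ, Function.iterate_fixed (isIncTree_graft hP hγ).apply_rootOf]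
    obtain ⟨B', hB', hwB'⟩ := hP.exists_mem hw'
    rcases iterate_graft_mem_or_eq_rootOf hP hγ hB' hwB' n with hk | hk <;> rw [hn] at hk
    · exact hP.eq_of_mem hB' hB hk (rootOf_mem (hP.1 B hB)) ▸ hwB'
    · exact absurd hk (ne_of_mem_erase hBroot)
  · calc B = hookN B (γ B hB) (rootOf B) := (hγ B hB).hookN_rootOf.symm
      _ ⊆ hookN V (graft (rootOf V) P γ) (rootOf B) :=
        (hγ B hB).hookN_subset_hookN_of_eqOn (eqOn_graft hP hB)
          (coe_subset.2 (erase_subset_erase _ hookN_subset))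
          (hookN_subset.trans ((hP.subset hB).trans (erase_subset _ _)))

lemma rootBlocks_graft (hP : IsPartition (V.erase (rootOf V)) P)
    (hγ : ∀ B (hB : B ∈ P), IsIncTree B (γ B hB)) :
    rootBlocks V (graft (rootOf V) P γ) = P := by
  have hchildren : rootChildren V (graft (rootOf V) P γ) = P.image rootOf := by
    ext v
    rw [mem_rootChildren, mem_image]
    constructor
    · rintro ⟨hv, hvρ⟩
      obtain ⟨B, hB, hvB⟩ := hP.exists_mem hv
      refine ⟨B, hB, ?_⟩
      rw [graft_of_mem hP hB hvB] at hvρ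
      by_contra hne
      rw [if_neg (Ne.symm hne)] at hvρ
      exact ne_of_mem_erase (hP.subset hB ((hγ B hB).apply_mem hvB)) hvρ
    · rintro ⟨B, hB, rfl⟩
      exact ⟨hP.subset hB (rootOf_mem (hP.1 B hB)), graft_rootOf hP hB⟩
  rw [rootBlocks, hchildren, image_image]
  exact (image_congr fun B hB => hookN_graft_rootOf hP hγ hB).trans image_id

lemma restrictTree_graft (hP : IsPartition s P) (hγ : ∀ B (hB : B ∈ P), IsIncTree B (γ B hB))
    (hB : B ∈ P) : restrictTree (graft ρ P γ) B = γ B hB := by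
  funext v
  by_cases hv : v ∈ B.erase (rootOf B)
  · exact (eqOn_restrictTree _ B (mem_coe.2 hv)).symm.trans (eqOn_graft hP hB (mem_coe.2 hv)).symm
  · rw [restrictTree_of_notMem hv, (hγ B hB).apply_eq_self hv]

lemma IsIncTree.graft_restrictTree {f : ℕ → ℕ} (hf : IsIncTree V f) :
    graft (rootOf V) (rootBlocks V f) (fun B _ => restrictTree f B) = f := by
  have hP := hf.isPartition_rootBlocks
  funext v
  by_cases hv : v ∈ V.erase (rootOf V)
  · obtain ⟨c, hc, hvc⟩ := hf.exists_mem_rootChildren hv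
    obtain ⟨hcV, hfc⟩ := mem_rootChildren.1 hc
    have hroot := hf.rootOf_hookN (mem_of_mem_erase hcV)
    rw [graft_of_mem hP (mem_image_of_mem _ hc) hvc, hroot]
    split_ifs with hvc'
    · rw [hvc', hfc]
    · exact (eqOn_restrictTree f _ (mem_coe.2 (mem_erase.2 ⟨by rwa [hroot], hvc⟩))).symm
  · rw [graft_of_notMem hP hv, hf.apply_eq_self hv]

end Graft

lemma finite_setOf_isIncTree (V : Finset ℕ) : {f : ℕ → ℕ | IsIncTree V f}.Finite := by
  have hcodomain : {g : V → ℕ | ∀ v, g v ∈ V}.Finite :=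
    (Set.Finite.pi fun _ => V.finite_toSet).subset fun g hg v _ => hg v
  refine Set.Finite.of_finite_image (f := fun f (v : V) => f v)
    (hcodomain.subset ?_) fun f hf g hg hfg => funext fun v => ?_
  · rintro _ ⟨f, hf, rfl⟩ v
    exact hf.apply_mem v.2
  · by_cases hv : v ∈ V
    · exact congrFun hfg ⟨v, hv⟩
    · rw [hf.2 v hv, hg.2 v hv]

noncomputable def incTrees (V : Finset ℕ) : Finset (ℕ → ℕ) :=
  (finite_setOf_isIncTree V).toFinset

lemma mem_incTrees {V : Finset ℕ} {f : ℕ → ℕ} : f ∈ incTrees V ↔ IsIncTree V f :=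
  Set.Finite.mem_toFinset _

lemma finsum_mem_isIncTree {M : Type*} [AddCommMonoid M] (V : Finset ℕ) (φ : (ℕ → ℕ) → M) :
    ∑ᶠ (f : ℕ → ℕ) (_ : IsIncTree V f), φ f = ∑ f ∈ incTrees V, φ f :=
  finsum_mem_eq_finite_toFinset_sum φ (finite_setOf_isIncTree V)

lemma sum_wtN_filter_rootBlocks_eq {V : Finset ℕ} {P : Finset (Finset ℕ)}
    (hP : IsPartition (V.erase (rootOf V)) P) :
    ∑ f ∈ (incTrees V).filter (rootBlocks V · = P), wtN V f
      = X (rootOf V) ^ P.card * ∏ B ∈ P, hookFactor B * ∑ g ∈ incTrees B, wtN B g := by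
  simp_rw [mul_sum]
  rw [prod_sum, mul_sum]
  refine sum_nbij' (fun f B _ => restrictTree f B) (fun γ => graft (rootOf V) P γ) ?_ ?_ ?_ ?_ ?_
  · intro f hf
    obtain ⟨hfT, rfl⟩ := mem_filter.1 hf
    refine mem_pi.2 fun B hB => mem_incTrees.2 ?_
    obtain ⟨c, hc, rfl⟩ := mem_image.1 hB
    exact (mem_incTrees.1 hfT).isIncTree_restrictTree (mem_of_mem_erase (mem_rootChildren.1 hc).1)
  · intro γ hγ
    have hγ' := fun B hB => mem_incTrees.1 (mem_pi.1 hγ B hB)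
    exact mem_filter.2 ⟨mem_incTrees.2 (isIncTree_graft hP hγ'), rootBlocks_graft hP hγ'⟩
  · intro f hf
    obtain ⟨hfT, rfl⟩ := mem_filter.1 hf
    exact (mem_incTrees.1 hfT).graft_restrictTree
  · intro γ hγ
    exact funext fun B => funext fun hB =>
      restrictTree_graft hP (fun B hB => mem_incTrees.1 (mem_pi.1 hγ B hB)) hB
  · intro f hf
    obtain ⟨hfT, rfl⟩ := mem_filter.1 hf
    rw [(mem_incTrees.1 hfT).wtN_eq_prod_rootBlocks, ← prod_attach]

theorem finsum_wtN_eq_finsum_isPartition (V : Finset ℕ) :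
    ∑ᶠ (f : ℕ → ℕ) (_ : IsIncTree V f), wtN V f
      = ∑ᶠ (P : Finset (Finset ℕ)) (_ : IsPartition (V.erase (rootOf V)) P),
          X (rootOf V) ^ P.card *
            ∏ B ∈ P, hookFactor B * ∑ᶠ (g : ℕ → ℕ) (_ : IsIncTree B g), wtN B g := by
  simp only [finsum_mem_isIncTree]
  have hfin := finite_setOf_isPartition (V.erase (rootOf V))
  calc ∑ f ∈ incTrees V, wtN V f
      = ∑ P ∈ hfin.toFinset, ∑ f ∈ (incTrees V).filter (rootBlocks V · = P), wtN V f :=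
        (sum_fiberwise_of_maps_to fun f hf =>
          hfin.mem_toFinset.2 (mem_incTrees.1 hf).isPartition_rootBlocks) _ |>.symm
    _ = ∑ P ∈ hfin.toFinset, X (rootOf V) ^ P.card *
          ∏ B ∈ P, hookFactor B * ∑ g ∈ incTrees B, wtN B g :=
        sum_congr rfl fun P hP => sum_wtN_filter_rootBlocks_eq (hfin.mem_toFinset.1 hP)
    _ = _ := (finsum_mem_eq_finite_toFinset_sum _ hfin).symm

/-- The recursion obtained by removing the root: for `r ≥ 2`, the sum of `wt(T)` over all
unordered increasing trees on `{1, …, r}` equals the sum, over all set partitions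
`{X_1, …, X_j}` of `{2, …, r}` into nonempty blocks, of
`k_1^j · ∏_{i=1}^{j} (K_{X_i} − |X_i| + 1) · (Σ_{T_i} wt(T_i))`, where the inner sum runs
over all unordered increasing trees with label set `X_i`. -/
theorem stmt11 (r : ℕ) (hr : 2 ≤ r) :
    ∑ᶠ (f : ℕ → ℕ) (_ : IsIncTree (Finset.Icc 1 r) f), wtN (Finset.Icc 1 r) f
      = ∑ᶠ (P : Finset (Finset ℕ))
          (_ : (∀ B ∈ P, B.Nonempty) ∧ (P : Set (Finset ℕ)).PairwiseDisjoint id ∧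
                P.biUnion id = Finset.Icc 2 r),
          (MvPolynomial.X 1 : MvPolynomial ℕ ℚ) ^ P.card *
            ∏ B ∈ P,
              ((∑ u ∈ B, MvPolynomial.X u) - (B.card : MvPolynomial ℕ ℚ) + 1) *
                ∑ᶠ (g : ℕ → ℕ) (_ : IsIncTree B g), wtN B g := by
  have hroot : rootOf (Finset.Icc 1 r) = 1 :=
    rootOf_eq (mem_Icc.2 ⟨le_rfl, by omega⟩) fun u hu => (mem_Icc.1 hu).1
  have herase : (Finset.Icc 1 r).erase 1 = Finset.Icc 2 r := by
    ext u
    simp only [mem_erase, mem_Icc]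
    omega
  have h := finsum_wtN_eq_finsum_isPartition (Finset.Icc 1 r)
  rwa [hroot, herase] at h
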